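/- Let H(s) = 1/∑_{i=0}^{k} c_i s^i and F(s) = C(sI−A)^{-1}B + D. Define A^H = ∑_{i=0}^{k} c_i A^i, B^H(s) = (∑_{j=0}^{k−1} s^j ∑_{i=j+1}^{k} c_i A^{i−j−1}) B, C^H = C, D^H = D. Then for any s such that both sI−A and H(s)^{-1}I − A^H are invertible, C^H (H(s)^{-1}I − A^H)^{-1} B^H(s) + D^H = F(s). -/
import Mathlib


/-- General synapse compensation. For `H(s)⁻¹ = ∑_{i=0}^k c_i s^i`,
`A^H = ∑_{i=0}^k c_i A^i`, `B^H(s) = (∑_{j=0}^{k−1} s^j ∑_{i=j+1}^k c_i A^{i−j−1}) B`,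
`C^H = C`, `D^H = D`, whenever `sI − A` and `H(s)⁻¹ I − A^H` are invertible,
`C^H (H(s)⁻¹ I − A^H)⁻¹ B^H(s) + D^H = C(sI−A)⁻¹B + D = F(s)`. -/
theorem general_synapse_compensation
    {n m p : Type*} [Fintype n] [DecidableEq n] [Fintype m] [Fintype p]
    (A : Matrix n n ℂ) (B : Matrix n m ℂ) (C : Matrix p n ℂ) (D : Matrix p m ℂ)
    (k : ℕ) (c : ℕ → ℂ) (s : ℂ)
    (Hinv : ℂ) (hH : Hinv = ∑ i ∈ Finset.range (k + 1), c i * s ^ i)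
    (AH : Matrix n n ℂ) (hA : AH = ∑ i ∈ Finset.range (k + 1), c i • A ^ i)
    (BH : Matrix n m ℂ)
    (hB : BH = (∑ j ∈ Finset.range k,
        s ^ j • ∑ i ∈ Finset.Icc (j + 1) k, c i • A ^ (i - j - 1)) * B)
    (h₁ : IsUnit (s • (1 : Matrix n n ℂ) - A))
    (h₂ : IsUnit (Hinv • (1 : Matrix n n ℂ) - AH)) :
    C * (Hinv • (1 : Matrix n n ℂ) - AH)⁻¹ * BH + D =
      C * (s • (1 : Matrix n n ℂ) - A)⁻¹ * B + D := by
  set P : Matrix n n ℂ := ∑ j ∈ Finset.range k,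
      s ^ j • ∑ i ∈ Finset.Icc (j + 1) k, c i • A ^ (i - j - 1) with hP
  have key : Hinv • (1 : Matrix n n ℂ) - AH = P * (s • (1 : Matrix n n ℂ) - A) := by
    have comm : Commute (s • (1 : Matrix n n ℂ)) A := by
      simp [Commute, SemiconjBy, Matrix.smul_mul, Matrix.mul_smul]
    have geom : ∀ i : ℕ, (s ^ i) • (1 : Matrix n n ℂ) - A ^ i =
        (∑ j ∈ Finset.range i, s ^ j • A ^ (i - 1 - j)) * (s • (1 : Matrix n n ℂ) - A) := by
      intro i
      have := comm.geom_sum₂_mul i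
      simp only [smul_pow, one_pow] at this
      rw [← this]
      congr 1
      refine Finset.sum_congr rfl fun j _ => ?_
      rw [Matrix.smul_mul]
      simp
    calc Hinv • (1 : Matrix n n ℂ) - AH
        = ∑ i ∈ Finset.range (k + 1), c i • ((s ^ i) • (1 : Matrix n n ℂ) - A ^ i) := by
          rw [hH, hA, Finset.sum_smul, ← Finset.sum_sub_distrib]
          refine Finset.sum_congr rfl fun i _ => ?_
          rw [smul_sub, smul_smul]
      _ = (∑ i ∈ Finset.range (k + 1), c i •
            ∑ j ∈ Finset.range i, s ^ j • A ^ (i - 1 - j)) * (s • (1 : Matrix n n ℂ) - A) := by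
          rw [Finset.sum_mul]
          refine Finset.sum_congr rfl fun i _ => ?_
          rw [geom i, Matrix.smul_mul]
      _ = P * (s • (1 : Matrix n n ℂ) - A) := by
          congr 1
          rw [hP]
          simp only [Finset.smul_sum]
          rw [Finset.sum_comm' (t' := Finset.range k)
            (s' := fun j => Finset.Icc (j + 1) k)]
          · refine Finset.sum_congr rfl fun j _ => Finset.sum_congr rfl fun i _ => ?_
            rw [smul_comm, Nat.sub_sub, Nat.sub_sub, Nat.add_comm]
          · intro i j
            simp only [Finset.mem_range, Finset.mem_Icc]
            omega
  have hPunit : IsUnit P.det := by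
    rw [key, Matrix.isUnit_iff_isUnit_det, Matrix.det_mul] at h₂
    exact isUnit_of_mul_isUnit_left h₂
  rw [key, Matrix.mul_inv_rev, hB]
  congr 1
  rw [Matrix.mul_assoc, Matrix.mul_assoc, ← Matrix.mul_assoc P⁻¹,
    Matrix.nonsing_inv_mul P hPunit, Matrix.one_mul, Matrix.mul_assoc]
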